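/- arXiv:2104.11613 — 2 statements merged into one kernel-verified Lean document; each statement's English description precedes it below -/
import Mathlib

section
/- For every ordinal α > ω, the partition relation α → (|α|+1, ω)² fails; that is, there exists a 2-coloring of the 2-element subsets of α with no 0-monochromatic subset of order type |α|+1 and no 1-monochromatic subset of order type ω. -/
/-! Sierpiński's colouring. Fix an injection `g` of `α` into `κ = |α|` and colour a pair
`x < y` by `0` if `g x < g y` and by `1` otherwise. On a `0`-homogeneous set `g` is strictly
increasing, so the set embeds into `κ` and has order type at most `κ < κ + 1`. On a
`1`-homogeneous set `g` is strictly decreasing, so an increasing `ω`-sequence in it would give a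
strictly decreasing sequence of ordinals. -/

open Ordinal Set

noncomputable def otype (A : Set Ordinal) : Ordinal.{1} :=
  Ordinal.type ((· < ·) : A → A → Prop)

def MonoColor (f : Finset Ordinal → Fin 2) (S : Set Ordinal) (c : Fin 2) : Prop :=
  ∀ x ∈ S, ∀ y ∈ S, x ≠ y → f {x, y} = c

def PartRel (α β γ : Ordinal.{0}) : Prop :=
  ∀ f : Finset Ordinal → Fin 2,
    (∃ B ⊆ Set.Iio α, otype B = Ordinal.lift.{1} β ∧ MonoColor f B 0) ∨
    (∃ C ⊆ Set.Iio α, otype C = Ordinal.lift.{1} γ ∧ MonoColor f C 1)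

def Indecomp (α : Ordinal) : Prop := ∀ β < α, ∀ γ < α, β + γ < α

lemma otype_Iio (o : Ordinal) : otype (Iio o) = lift.{1} o := by
  have := typein_ordinal o
  rwa [← type_subrel] at this

lemma otype_le_of_strictMonoOn {A B : Set Ordinal} {g : Ordinal → Ordinal}
    (hg : StrictMonoOn g A) (hAB : MapsTo g A B) : otype A ≤ otype B :=
  type_le_iff'.mpr ⟨(OrderEmbedding.ofStrictMono hAB.restrict
    fun a b hab => hg a.2 b.2 hab).ltEmbedding⟩

lemma otype_ne_omega0_of_strictAntiOn {C : Set Ordinal} {g : Ordinal → Ordinal}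
    (hg : StrictAntiOn g C) : otype C ≠ lift.{1} (ω : Ordinal.{0}) := by
  intro hC
  obtain ⟨e⟩ : Nonempty (((· < ·) : ℕ → ℕ → Prop) ≃r ((· < ·) : C → C → Prop)) := by
    rw [← lift_type_eq.{0, 1, 1}, type_nat_lt, ← hC, lift_id]
    rfl
  refine not_strictAnti_of_wellFoundedLT (fun n => g (e n)) fun m n hmn => ?_
  exact hg (e m).2 (e n).2 (e.map_rel_iff.2 hmn)

lemma exists_injOn_mapsTo_Iio_card_ord (α : Ordinal) :
    ∃ g : Ordinal → Ordinal, InjOn g (Iio α) ∧ MapsTo g (Iio α) (Iio α.card.ord) := by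
  classical
  obtain ⟨e⟩ : Nonempty (Iio α ≃ Iio α.card.ord) := Cardinal.eq.mp <| by
    rw [Cardinal.mk_Iio_ordinal, Cardinal.mk_Iio_ordinal, Cardinal.card_ord]
  refine ⟨fun x => if h : x < α then e ⟨x, h⟩ else 0, fun x hx y hy hxy => ?_, fun x hx => ?_⟩
  · simp only [dif_pos (show x < α from hx), dif_pos (show y < α from hy)] at hxy
    exact congrArg Subtype.val (e.injective (Subtype.ext hxy))
  · simp only [dif_pos (show x < α from hx)]
    exact (e _).2

open Classical in
noncomputable def sierpinskiColoring (g : Ordinal → Ordinal) (s : Finset Ordinal) : Fin 2 :=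
  if ∃ x ∈ s, ∃ y ∈ s, x < y ∧ g x < g y then 0 else 1

section sierpinskiColoring

variable {g : Ordinal → Ordinal}

lemma sierpinskiColoring_pair_eq_zero_iff {x y : Ordinal} (hxy : x < y) :
    sierpinskiColoring g {x, y} = 0 ↔ g x < g y := by
  have hpair : (∃ a ∈ ({x, y} : Finset Ordinal), ∃ b ∈ ({x, y} : Finset Ordinal),
      a < b ∧ g a < g b) ↔ g x < g y := by
    simp [hxy, hxy.not_gt]
  rw [sierpinskiColoring, ← hpair]
  split_ifs <;> simp_all

lemma strictMonoOn_of_monoColor_zero {B : Set Ordinal}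
    (hB : MonoColor (sierpinskiColoring g) B 0) : StrictMonoOn g B :=
  fun _ ha _ hb hab => (sierpinskiColoring_pair_eq_zero_iff hab).1 (hB _ ha _ hb hab.ne)

lemma strictAntiOn_of_monoColor_one {C : Set Ordinal}
    (hC : MonoColor (sierpinskiColoring g) C 1) (hg : InjOn g C) : StrictAntiOn g C := by
  intro a ha b hb hab
  refine (not_lt.1 fun hlt => ?_).lt_of_ne (hg.ne hb ha hab.ne')
  have := (sierpinskiColoring_pair_eq_zero_iff hab).2 hlt
  rw [hC a ha b hb hab.ne] at this
  exact absurd this (by decide)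

end sierpinskiColoring

theorem stmt0_general (α : Ordinal) :
    ¬ PartRel α (α.card.ord + 1) Ordinal.omega0 := by
  obtain ⟨g, hinj, hmaps⟩ := exists_injOn_mapsTo_Iio_card_ord α
  intro hP
  rcases hP (sierpinskiColoring g) with ⟨B, hBα, hB, hB0⟩ | ⟨C, hCα, hC, hC1⟩
  · have hle := otype_le_of_strictMonoOn (strictMonoOn_of_monoColor_zero hB0)
      (hmaps.mono_left hBα)
    rw [hB, otype_Iio, lift_le] at hle
    exact (Order.lt_succ _).not_ge hle
  · exact otype_ne_omega0_of_strictAntiOn (strictAntiOn_of_monoColor_one hC1 (hinj.mono hCα)) hC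

theorem stmt0 (α : Ordinal) (hα : Ordinal.omega0 < α) :
    ¬ PartRel α (α.card.ord + 1) Ordinal.omega0 :=
  stmt0_general α
end

section
/- Every ordinal is a 'strong type': if β is an ordinal and D ⊆ β, then there exist finitely many sets D₁, …, Dₙ ⊆ D whose union is D, such that the order type of each Dᵢ is additively indecomposable, and for every M ⊆ D, if the order type of M ∩ Dᵢ is at least the order type of Dᵢ for each i, then the order type of M equals the order type of D. -/
open Ordinal Set

/-! If the order type of `D` is indecomposable, `D` is its own decomposition. Otherwise it is
`a + b` with `a, b` smaller, so `D` is cut at some `x` into an initial segment of type `a` and a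
final segment of type `b`; decompose both by induction on the order type and concatenate. A set
`M` that meets every piece in its full type then meets both segments in their full types, and
order types add across consecutive segments. -/

theorem exists_add_eq_of_not_indecomp {o : Ordinal} (h : ¬Indecomp o) :
    ∃ a < o, ∃ b < o, a + b = o := by
  simp only [Indecomp, not_forall, not_lt] at h
  obtain ⟨a, ha, b, hb, hab⟩ := h
  exact ⟨a, ha, o - a, (Ordinal.sub_le.2 hab).trans_lt hb,
    Ordinal.add_sub_cancel_of_le ha.le⟩

lemma otype_mono {A B : Set Ordinal} (h : A ⊆ B) : otype A ≤ otype B :=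
  type_le_iff'.2 ⟨⟨⟨inclusion h, inclusion_injective h⟩, Iff.rfl⟩⟩

lemma otype_union_of_forall_lt {A B : Set Ordinal} (h : ∀ a ∈ A, ∀ b ∈ B, a < b) :
    otype (A ∪ B) = otype A + otype B := by
  classical
  have hdisj : Disjoint A B :=
    disjoint_left.2 fun x hxA hxB => (h x hxA x hxB).false
  rw [otype, otype, otype, ← type_sum_lex]
  refine type_eq.2 ⟨RelIso.mk (Equiv.Set.union hdisj) ?_⟩
  rintro ⟨x, hx⟩ ⟨y, hy⟩
  rw [← Subtype.coe_lt_coe]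
  rcases hx with hx | hx <;> rcases hy with hy | hy <;>
    simp [Equiv.Set.union_apply_left, Equiv.Set.union_apply_right, hx, hy, h,
      fun a ha b hb => (h a ha b hb).not_gt]

lemma otype_inter_Iio {D : Set Ordinal} (x : D) :
    otype (D ∩ Iio (x : Ordinal)) = typein ((· < ·) : D → D → Prop) x := by
  rw [← type_subrel]
  exact type_eq.2 ⟨RelIso.mk
    { toFun := fun y => ⟨⟨y, y.2.1⟩, Subtype.coe_lt_coe.1 y.2.2⟩
      invFun := fun y => ⟨y.1, y.1.2, Subtype.coe_lt_coe.2 y.2⟩ } Iff.rfl⟩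

lemma exists_otype_inter_Iio_eq {D : Set Ordinal} {c : Ordinal} (hc : c < otype D) :
    ∃ x, otype (D ∩ Iio x) = c :=
  ⟨enum (α := D) (· < ·) ⟨c, hc⟩, by rw [otype_inter_Iio]; exact typein_enum _ hc⟩

lemma forall_lt_of_mem_inter_Iio_of_mem_diff {D : Set Ordinal} {x : Ordinal} :
    ∀ a ∈ D ∩ Iio x, ∀ b ∈ D \ Iio x, a < b :=
  fun _ ha _ hb => ha.2.trans_le (not_lt.1 hb.2)

lemma otype_eq_otype_inter_Iio_add (D : Set Ordinal) (x : Ordinal) :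
    otype D = otype (D ∩ Iio x) + otype (D \ Iio x) := by
  rw [← otype_union_of_forall_lt forall_lt_of_mem_inter_Iio_of_mem_diff, inter_union_sdiff]

lemma exists_split_of_not_indecomp {D : Set Ordinal} (h : ¬Indecomp (otype D)) :
    ∃ x, otype (D ∩ Iio x) < otype D ∧ otype (D \ Iio x) < otype D := by
  obtain ⟨a, ha, b, hb, hab⟩ := exists_add_eq_of_not_indecomp h
  obtain ⟨x, hx⟩ := exists_otype_inter_Iio_eq ha
  refine ⟨x, hx ▸ ha, ?_⟩
  have hsum : a + otype (D \ Iio x) = a + b := by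
    rw [hab, ← hx, ← otype_eq_otype_inter_Iio_add]
  exact add_left_cancel hsum ▸ hb

structure IsStrongDecomposition (D : Set Ordinal) {n : ℕ} (Ds : Fin n → Set Ordinal) : Prop where
  iUnion_eq : ⋃ i, Ds i = D
  indecomp : ∀ i, Indecomp (otype (Ds i))
  otype_eq_of_le : ∀ M ⊆ D, (∀ i, otype (Ds i) ≤ otype (M ∩ Ds i)) → otype M = otype D

namespace IsStrongDecomposition

variable {D : Set Ordinal} {n : ℕ} {Ds : Fin n → Set Ordinal}

lemma subset (hD : IsStrongDecomposition D Ds) (i : Fin n) : Ds i ⊆ D :=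
  hD.iUnion_eq ▸ subset_iUnion Ds i

lemma otype_inter_eq (hD : IsStrongDecomposition D Ds) {M : Set Ordinal}
    (hM : ∀ i, otype (Ds i) ≤ otype (M ∩ Ds i)) : otype (M ∩ D) = otype D :=
  hD.otype_eq_of_le _ inter_subset_right fun i => by
    rw [inter_assoc, inter_eq_right.2 (hD.subset i)]
    exact hM i

lemma of_indecomp (h : Indecomp (otype D)) : IsStrongDecomposition D fun _ : Fin 1 => D where
  iUnion_eq := iUnion_const D
  indecomp _ := h
  otype_eq_of_le M hM hle :=
    (otype_mono hM).antisymm (by simpa [inter_eq_left.2 hM] using hle 0)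

lemma append {A B : Set Ordinal} {m : ℕ} {Es : Fin m → Set Ordinal}
    (hA : IsStrongDecomposition A Ds) (hB : IsStrongDecomposition B Es)
    (hlt : ∀ a ∈ A, ∀ b ∈ B, a < b) : IsStrongDecomposition (A ∪ B) (Fin.append Ds Es) where
  iUnion_eq := by
    rw [← hA.iUnion_eq, ← hB.iUnion_eq]
    ext x
    simp only [mem_iUnion, mem_union]
    constructor
    · rintro ⟨i, hi⟩
      induction i using Fin.addCases with
      | left i => exact .inl ⟨i, by simpa using hi⟩
      | right i => exact .inr ⟨i, by simpa using hi⟩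
    · rintro (⟨i, hi⟩ | ⟨i, hi⟩)
      · exact ⟨Fin.castAdd m i, by simpa⟩
      · exact ⟨Fin.natAdd n i, by simpa⟩
  indecomp := by
    simpa [Fin.forall_fin_add] using ⟨hA.indecomp, hB.indecomp⟩
  otype_eq_of_le M hM hle := by
    simp only [Fin.forall_fin_add, Fin.append_left, Fin.append_right] at hle
    calc otype M = otype (M ∩ A ∪ M ∩ B) := by
          rw [← inter_union_distrib_left, inter_eq_left.2 hM]
      _ = otype (M ∩ A) + otype (M ∩ B) :=
          otype_union_of_forall_lt fun a ha b hb => hlt a ha.2 b hb.2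
      _ = otype (A ∪ B) := by
          rw [hA.otype_inter_eq hle.1, hB.otype_inter_eq hle.2, otype_union_of_forall_lt hlt]

end IsStrongDecomposition

theorem exists_isStrongDecomposition (D : Set Ordinal) :
    ∃ (n : ℕ) (Ds : Fin n → Set Ordinal), IsStrongDecomposition D Ds := by
  by_cases h : Indecomp (otype D)
  · exact ⟨1, _, .of_indecomp h⟩
  obtain ⟨x, hIio, hsdiff⟩ := exists_split_of_not_indecomp h
  obtain ⟨m, Ds, hDs⟩ := exists_isStrongDecomposition (D ∩ Iio x)
  obtain ⟨n, Es, hEs⟩ := exists_isStrongDecomposition (D \ Iio x)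
  exact ⟨m + n, _,
    inter_union_sdiff D (Iio x) ▸ hDs.append hEs forall_lt_of_mem_inter_Iio_of_mem_diff⟩
termination_by otype D

theorem stmt5_general (D : Set Ordinal) :
    ∃ (n : ℕ) (Ds : Fin n → Set Ordinal),
      (∀ i, Ds i ⊆ D) ∧ (⋃ i, Ds i) = D ∧
      (∀ i, Indecomp (otype (Ds i))) ∧
      (∀ M ⊆ D, (∀ i, otype (Ds i) ≤ otype (M ∩ Ds i)) → otype M = otype D) := by
  obtain ⟨n, Ds, hDs⟩ := exists_isStrongDecomposition D
  exact ⟨n, Ds, hDs.subset, hDs.iUnion_eq, hDs.indecomp, hDs.otype_eq_of_le⟩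

theorem stmt5 (β : Ordinal) (D : Set Ordinal) (hD : D ⊆ Set.Iio β) :
    ∃ (n : ℕ) (Ds : Fin n → Set Ordinal),
      (∀ i, Ds i ⊆ D) ∧ (⋃ i, Ds i) = D ∧
      (∀ i, Indecomp (otype (Ds i))) ∧
      (∀ M ⊆ D, (∀ i, otype (Ds i) ≤ otype (M ∩ Ds i)) → otype M = otype D) :=
  stmt5_general D
end
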